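/- Let x ∈ L be a non-torsion element with normal form x = a_1 e_1 + ⋯ + a_n e_n + a c. Set I := {1 ≤ i ≤ n : a_i ≠ 0}, and for i ∈ I set d_i := gcd(a_i, p_i) and p'_i := p_i/d_i (so p'_i ≥ 2 and gcd(p'_i, a_i/d_i) = 1). Let L' := L((p'_i)_{i∈I}) with generators e'_i and common value c' of the p'_i e'_i, let S' := ℂ[t_0,t_1,(x'_i)_{i∈I}]/((x'_i)^{p'_i} − ℓ_i(t_0,t_1) : i ∈ I) with its L'-grading, and set x' := ∑_{i∈I} (a_i/d_i) e'_i + a c' ∈ L'. Then there is an isomorphism of ℤ-graded ℂ-algebras S^x ≅ (S')^{x'}. -/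

import Mathlib

set_option synthInstance.maxHeartbeats 1000000
set_option maxHeartbeats 1000000
noncomputable section

open MvPolynomial

def LRel (ι : Type) [DecidableEq ι] (p : ι → ℕ) : AddSubgroup (Option ι → ℤ) :=
  AddSubgroup.closure
    { v | ∃ i : ι, v = (p i : ℤ) • Pi.single (some i) 1 - Pi.single (none : Option ι) 1 }

abbrev LGroup (ι : Type) [DecidableEq ι] (p : ι → ℕ) : Type :=
  (Option ι → ℤ) ⧸ LRel ι p

def egen {ι : Type} [DecidableEq ι] (p : ι → ℕ) (i : ι) : LGroup ι p :=
  QuotientAddGroup.mk (Pi.single (some i) 1)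

def cgen {ι : Type} [DecidableEq ι] (p : ι → ℕ) : LGroup ι p :=
  QuotientAddGroup.mk (Pi.single (none : Option ι) 1)

def Lplus {ι : Type} [DecidableEq ι] (p : ι → ℕ) : AddSubmonoid (LGroup ι p) :=
  AddSubmonoid.closure (Set.range (egen p))

abbrev SPoly (ι : Type) : Type := MvPolynomial (ι ⊕ Fin 2) ℂ

def SIdl (ι : Type) (p : ι → ℕ) (c0 c1 : ι → ℂ) : Ideal (SPoly ι) :=
  Ideal.span { f | ∃ i : ι,
    f = X (Sum.inl i) ^ (p i) - (C (c0 i) * X (Sum.inr 0) + C (c1 i) * X (Sum.inr 1)) }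

abbrev SAlg (ι : Type) (p : ι → ℕ) (c0 c1 : ι → ℂ) : Type := SPoly ι ⧸ SIdl ι p c0 c1

def wtA {ι : Type} [Fintype ι] [DecidableEq ι] (p : ι → ℕ) (m : (ι ⊕ Fin 2) →₀ ℕ) :
    LGroup ι p :=
  (∑ i : ι, m (Sum.inl i) • egen p i) + (m (Sum.inr 0) + m (Sum.inr 1)) • cgen p

def polyCompA {ι : Type} [Fintype ι] [DecidableEq ι] (p : ι → ℕ) (y : LGroup ι p) :
    Submodule ℂ (SPoly ι) where
  carrier := { f | ∀ m, coeff m f ≠ 0 → wtA p m = y }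
  add_mem' := by
    intro f g hf hg m hm
    by_cases h : coeff m f = 0
    · refine hg m fun h' => hm ?_
      simp [coeff_add, h, h']
    · exact hf m h
  zero_mem' := by
    intro m hm
    simp at hm
  smul_mem' := by
    intro c f hf m hm
    refine hf m fun h => hm ?_
    simp [coeff_smul, h]

def SCompA {ι : Type} [Fintype ι] [DecidableEq ι] (p : ι → ℕ) (c0 c1 : ι → ℂ)
    (y : LGroup ι p) : Submodule ℂ (SAlg ι p c0 c1) :=
  (polyCompA p y).map (Ideal.Quotient.mkₐ ℂ (SIdl ι p c0 c1)).toLinearMap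

def SVerA {ι : Type} [Fintype ι] [DecidableEq ι] (p : ι → ℕ) (c0 c1 : ι → ℂ)
    (x : LGroup ι p) : Submodule ℂ (SAlg ι p c0 c1) :=
  ⨆ k : ℤ, SCompA p c0 c1 (k • x)

def SShiftA {ι : Type} [Fintype ι] [DecidableEq ι] (p : ι → ℕ) (c0 c1 : ι → ℂ)
    (y x : LGroup ι p) : Submodule ℂ (SAlg ι p c0 c1) :=
  ⨆ k : ℤ, SCompA p c0 c1 (y + k • x)

/-- Restriction of the weight data `p` to the subset `I`, dividing by `d`. -/
def pRes {n : ℕ} (p d : Fin n → ℕ) (I : Finset (Fin n)) : ↥I → ℕ :=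
  fun i => p i.1 / d i.1

/-- Restriction of a family of scalars to the subset `I`. -/
def cRes {n : ℕ} (c : Fin n → ℂ) (I : Finset (Fin n)) : ↥I → ℂ :=
  fun i => c i.1

/-!
Let `dᵢ` be a common divisor of `aᵢ` and `pᵢ` (for the theorem, `dᵢ = gcd(aᵢ, pᵢ)`). The
substitution `x'ᵢ ↦ xᵢ^{dᵢ}`, `tⱼ ↦ tⱼ` gives an algebra map `S' → S` lying over the embedding
`L' → L`, `e'ᵢ ↦ dᵢeᵢ`, `c' ↦ c`, which sends `x'` to `x`.

The map is injective: modulo the relations `xᵢ^{pᵢ} = ℓᵢ` every polynomial has a unique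
representative in which each exponent of `xᵢ` is below `pᵢ`, and the substitution keeps such
polynomials reduced. It maps `S'_{kx'}` onto `S_{kx}`: the exponent `bᵢ` of `xᵢ` in a reduced
monomial of degree `kx` satisfies `bᵢ ≡ k aᵢ (mod pᵢ)`, so `dᵢ ∣ bᵢ`, and `bᵢ = 0` when `aᵢ = 0`.
An injective algebra map carrying the graded pieces of one Veronese ring onto those of the other
restricts to a graded isomorphism.
-/

theorem MvPolynomial.algHom_monomial_of_X {σ τ R : Type*} [CommSemiring R]
    (φ : MvPolynomial σ R →ₐ[R] MvPolynomial τ R) (E : (σ →₀ ℕ) →+ (τ →₀ ℕ))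
    (hφ : ∀ s, φ (X s) = monomial (E (Finsupp.single s 1)) 1) (m : σ →₀ ℕ) (c : R) :
    φ (monomial m c) = monomial (E m) c := by
  induction m using Finsupp.induction with
  | zero => simp only [map_zero, ← C_apply, ← algebraMap_eq, φ.commutes]
  | single_add s k m _ _ ih =>
    rw [monomial_single_add, map_mul, map_pow, hφ, ih, monomial_pow, one_pow, monomial_mul,
      one_mul, ← map_nsmul, Finsupp.smul_single_one, ← map_add]

theorem exists_algEquiv_of_map_eq {R A B ι : Type*} [CommSemiring R] [Semiring A] [Semiring B]
    [Algebra R A] [Algebra R B] (ψ : B →ₐ[R] A) (hψ : Function.Injective ψ)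
    {M : ι → Submodule R A} {N : ι → Submodule R B} (hMN : ∀ k, (N k).map ψ.toLinearMap = M k)
    {S : Subalgebra R A} {T : Subalgebra R B} (hS : Subalgebra.toSubmodule S = ⨆ k, M k)
    (hT : Subalgebra.toSubmodule T = ⨆ k, N k) :
    ∃ φ : S ≃ₐ[R] T, ∀ k (w : S), (w : A) ∈ M k ↔ (φ w : B) ∈ N k := by
  have hTS : T.map ψ = S := Subalgebra.toSubmodule_injective <| by
    rw [Subalgebra.map_toSubmodule, hT, Submodule.map_iSup, hS]
    exact iSup_congr hMN
  let φ := (Subalgebra.equivMapOfInjective T ψ hψ).trans (Subalgebra.equivOfEq _ _ hTS)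
  refine ⟨φ.symm, fun k w => ?_⟩
  have hw : ψ (φ.symm w) = w := congrArg Subtype.val (φ.apply_symm_apply w)
  rw [← hw, ← hMN k]
  exact ⟨fun ⟨u, hu, he⟩ => hψ he ▸ hu, fun h => ⟨_, h, rfl⟩⟩

namespace LGroup

variable {ι : Type} [Fintype ι] [DecidableEq ι] {p : ι → ℕ}

theorem mem_LRel {v : Option ι → ℤ} :
    v ∈ LRel ι p ↔ ∃ q : ι → ℤ, (∀ i, v (some i) = p i * q i) ∧ v none = -∑ i, q i := by
  have hgen : {v | ∃ i : ι, v = (p i : ℤ) • Pi.single (some i) 1 - Pi.single (none : Option ι) 1}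
      = Set.range fun i =>
        ((p i : ℤ) • Pi.single (some i) 1 - Pi.single none 1 : Option ι → ℤ) := by
    ext; simp [eq_comm]
  rw [LRel, hgen, AddSubgroup.mem_closure_range_iff_of_fintype]
  constructor
  · rintro ⟨q, rfl⟩
    refine ⟨q, fun i => ?_, ?_⟩ <;> simp [Finset.sum_apply, Pi.single_apply, mul_comm]
  · rintro ⟨q, hsome, hnone⟩
    refine ⟨q, funext fun o => ?_⟩
    cases o <;> simp [Finset.sum_apply, Pi.single_apply, hsome, hnone, mul_comm]

theorem mk_eq_zero_iff {v : Option ι → ℤ} :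
    (QuotientAddGroup.mk v : LGroup ι p) = 0 ↔
      ∃ q : ι → ℤ, (∀ i, v (some i) = p i * q i) ∧ v none = -∑ i, q i := by
  rw [QuotientAddGroup.eq_zero_iff, mem_LRel]

theorem dvd_sub_of_mk_eq {v w : Option ι → ℤ}
    (h : (QuotientAddGroup.mk v : LGroup ι p) = QuotientAddGroup.mk w) (i : ι) :
    (p i : ℤ) ∣ v (some i) - w (some i) := by
  rw [← sub_eq_zero, ← QuotientAddGroup.mk_sub, mk_eq_zero_iff] at h
  obtain ⟨q, hq, -⟩ := h
  exact ⟨q i, hq i⟩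

theorem nsmul_egen (i : ι) : p i • egen p i = cgen p := by
  rw [egen, cgen, ← QuotientAddGroup.mk_nsmul, eq_comm, QuotientAddGroup.eq, mem_LRel]
  refine ⟨Pi.single i 1, fun j => ?_, ?_⟩
  · by_cases h : j = i <;> simp [h]
  · simp

theorem sum_nsmul_egen_add_zsmul_cgen (b : ι → ℕ) (z : ℤ) :
    ∑ i, b i • egen p i + z • cgen p =
      QuotientAddGroup.mk (fun o => o.elim z fun i => (b i : ℤ)) := by
  simp only [egen, cgen, ← QuotientAddGroup.mk_nsmul, ← QuotientAddGroup.mk_zsmul,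
    ← QuotientAddGroup.mk_sum, ← QuotientAddGroup.mk_add]
  congr 1
  funext o
  cases o <;> simp [Finset.sum_apply, Pi.single_apply]

end LGroup

section Relations

variable {ι : Type} (p : ι → ℕ) (c0 c1 : ι → ℂ)

def lform (i : ι) : SPoly ι := C (c0 i) * X (Sum.inr 0) + C (c1 i) * X (Sum.inr 1)

def reducedSubmodule : Submodule ℂ (SPoly ι) :=
  restrictSupport ℂ {m | ∀ i, m (Sum.inl i) < p i}

variable {p c0 c1}

theorem X_pow_sub_lform_mem_SIdl (i : ι) : X (Sum.inl i) ^ p i - lform c0 c1 i ∈ SIdl ι p c0 c1 :=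
  Ideal.subset_span ⟨i, rfl⟩

theorem degreeOf_inl_lform (i j : ι) : degreeOf (Sum.inl i) (lform c0 c1 j) = 0 := by
  classical
  refine Nat.eq_zero_of_le_zero ((degreeOf_add_le _ _ _).trans (max_le ?_ ?_)) <;>
    exact (degreeOf_C_mul_le _ _ _).trans (by simp [degreeOf_X])

end Relations

section Grading

variable {ι : Type} [DecidableEq ι] (p : ι → ℕ)

def lweight : ι ⊕ Fin 2 → LGroup ι p := Sum.elim (egen p) fun _ => cgen p

variable {p}

theorem isWeightedHomogeneous_lform (c0 c1 : ι → ℂ) (i : ι) :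
    IsWeightedHomogeneous (lweight p) (lform c0 c1 i) (cgen p) := by
  have h (j : Fin 2) (a : ℂ) :
      IsWeightedHomogeneous (lweight p) (C a * X (Sum.inr j) : SPoly ι) (cgen p) := by
    simpa [lweight] using (isWeightedHomogeneous_C (lweight p) a).mul
      (isWeightedHomogeneous_X ℂ (lweight p) (Sum.inr j))
  exact (h 0 _).add (h 1 _)

variable [Fintype ι]

theorem wtA_eq_weight (m : (ι ⊕ Fin 2) →₀ ℕ) : wtA p m = Finsupp.weight (lweight p) m := by
  rw [Finsupp.weight_apply, Finsupp.sum_fintype _ _ (by simp),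
    Fintype.sum_sum_type, Fin.sum_univ_two, wtA, add_smul]
  rfl

theorem weight_lweight_eq_mk (m : (ι ⊕ Fin 2) →₀ ℕ) :
    Finsupp.weight (lweight p) m = QuotientAddGroup.mk
      (fun o => o.elim ((m (Sum.inr 0) + m (Sum.inr 1) : ℕ) : ℤ) fun i => (m (Sum.inl i) : ℤ)) := by
  rw [← wtA_eq_weight, wtA, ← natCast_zsmul, LGroup.sum_nsmul_egen_add_zsmul_cgen]

theorem mem_SCompA {c0 c1 : ι → ℂ} {y : LGroup ι p} {w : SAlg ι p c0 c1} :
    w ∈ SCompA p c0 c1 y ↔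
      ∃ f, IsWeightedHomogeneous (lweight p) f y ∧ Ideal.Quotient.mk _ f = w := by
  simp only [SCompA, Submodule.mem_map, polyCompA, Submodule.mem_mk, AddSubmonoid.mem_mk,
    AddSubsemigroup.mem_mk, Set.mem_ofPred_eq, wtA_eq_weight]
  rfl

end Grading

section NormalForm

variable {ι : Type} [Fintype ι] (p : ι → ℕ) (c0 c1 : ι → ℂ)

def reduceExp (m : (ι ⊕ Fin 2) →₀ ℕ) : (ι ⊕ Fin 2) →₀ ℕ :=
  Finsupp.equivFunOnFinite.symm (Sum.elim (fun i => m (Sum.inl i) % p i) fun j => m (Sum.inr j))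

@[simp] theorem reduceExp_inl (m : (ι ⊕ Fin 2) →₀ ℕ) (i : ι) :
    reduceExp p m (Sum.inl i) = m (Sum.inl i) % p i := rfl

@[simp] theorem reduceExp_inr (m : (ι ⊕ Fin 2) →₀ ℕ) (j : Fin 2) :
    reduceExp p m (Sum.inr j) = m (Sum.inr j) := rfl

def normalMonomial (m : (ι ⊕ Fin 2) →₀ ℕ) : SPoly ι :=
  (∏ i, lform c0 c1 i ^ (m (Sum.inl i) / p i)) * monomial (reduceExp p m) 1

def normalForm : SPoly ι →ₗ[ℂ] SPoly ι :=
  (basisMonomials _ ℂ).constr ℂ (normalMonomial p c0 c1)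

variable {p c0 c1}

theorem normalForm_monomial (m : (ι ⊕ Fin 2) →₀ ℕ) (c : ℂ) :
    normalForm p c0 c1 (monomial m c) = c • normalMonomial p c0 c1 m := by
  have : monomial m c = c • basisMonomials _ ℂ m := by simp [smul_monomial]
  rw [this, map_smul, normalForm, Module.Basis.constr_basis]

theorem normalForm_eq_sum (f : SPoly ι) :
    normalForm p c0 c1 f = ∑ m ∈ f.support, coeff m f • normalMonomial p c0 c1 m := by
  conv_lhs => rw [f.as_sum]
  simp only [map_sum, normalForm_monomial]

theorem normalMonomial_mem_reducedSubmodule (hp : ∀ i, 0 < p i) (m : (ι ⊕ Fin 2) →₀ ℕ) :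
    normalMonomial p c0 c1 m ∈ reducedSubmodule p := by
  rw [reducedSubmodule, mem_restrictSupport_iff]
  intro u hu i
  have hprod : degreeOf (Sum.inl i) (∏ j, lform c0 c1 j ^ (m (Sum.inl j) / p j)) = 0 := by
    refine Nat.eq_zero_of_le_zero ((degreeOf_prod_le _ _ _).trans ?_)
    refine (Finset.sum_le_sum fun j _ => degreeOf_pow_le _ _ _).trans ?_
    simp [degreeOf_inl_lform]
  have hdeg : degreeOf (Sum.inl i) (normalMonomial p c0 c1 m) < p i :=
    calc degreeOf (Sum.inl i) (normalMonomial p c0 c1 m)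
        ≤ 0 + degreeOf (Sum.inl i) (monomial (reduceExp p m) (1 : ℂ)) :=
          hprod ▸ degreeOf_mul_le _ _ _
      _ = m (Sum.inl i) % p i := by rw [degreeOf_monomial_eq _ _ one_ne_zero]; simp
      _ < p i := Nat.mod_lt _ (hp i)
  exact (degreeOf_lt_iff (hp i)).mp hdeg u hu

theorem normalForm_mem_reducedSubmodule (hp : ∀ i, 0 < p i) (f : SPoly ι) :
    normalForm p c0 c1 f ∈ reducedSubmodule p := by
  rw [normalForm_eq_sum]
  exact Submodule.sum_mem _ fun m _ =>
    Submodule.smul_mem _ _ (normalMonomial_mem_reducedSubmodule hp m)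

theorem normalForm_of_mem_reducedSubmodule {f : SPoly ι} (hf : f ∈ reducedSubmodule p) :
    normalForm p c0 c1 f = f := by
  rw [normalForm_eq_sum]
  conv_rhs => rw [f.as_sum]
  refine Finset.sum_congr rfl fun m hm => ?_
  rw [reducedSubmodule, mem_restrictSupport_iff] at hf
  have hm' : ∀ i, m (Sum.inl i) < p i := hf hm
  have hred : reduceExp p m = m := by ext (i | j) <;> simp [Nat.mod_eq_of_lt (hm' _)]
  simp [normalMonomial, Nat.div_eq_of_lt (hm' _), hred, smul_monomial]

variable [DecidableEq ι]

theorem exp_eq_sum_add_reduceExp (m : (ι ⊕ Fin 2) →₀ ℕ) :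
    m = ∑ i, (m (Sum.inl i) / p i) • Finsupp.single (Sum.inl i) (p i) + reduceExp p m := by
  ext (i | j)
  · simp [Finsupp.single_apply, Nat.div_add_mod']
  · simp

theorem mk_normalMonomial (m : (ι ⊕ Fin 2) →₀ ℕ) :
    Ideal.Quotient.mk (SIdl ι p c0 c1) (normalMonomial p c0 c1 m) =
      Ideal.Quotient.mk _ (monomial m 1) := by
  have hX (i : ι) : Ideal.Quotient.mk (SIdl ι p c0 c1) (X (Sum.inl i) ^ p i) =
      Ideal.Quotient.mk _ (lform c0 c1 i) :=
    Ideal.Quotient.eq.mpr (X_pow_sub_lform_mem_SIdl i)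
  have hmon (i : ι) (k : ℕ) : monomial (k • Finsupp.single (Sum.inl i) (p i)) (1 : ℂ) =
      (X (Sum.inl i) ^ p i : SPoly ι) ^ k := by
    rw [X_pow_eq_monomial, monomial_pow, one_pow]
  conv_rhs => rw [exp_eq_sum_add_reduceExp (p := p) m]
  rw [← mul_one (1 : ℂ), ← monomial_mul, monomial_sum_index, C_1, one_mul]
  simp only [normalMonomial, map_mul, map_prod, hmon, map_pow, hX]

theorem mk_normalForm (f : SPoly ι) :
    Ideal.Quotient.mk (SIdl ι p c0 c1) (normalForm p c0 c1 f) = Ideal.Quotient.mk _ f := by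
  induction f using MvPolynomial.induction_on' with
  | monomial m c =>
    rw [normalForm_monomial, smul_eq_C_mul, map_mul, mk_normalMonomial, ← map_mul, C_mul_monomial,
      mul_one]
  | add f g hf hg => rw [map_add, map_add, hf, hg, map_add]

theorem normalMonomial_add_single_inl {i : ι} (hpi : 0 < p i) (m : (ι ⊕ Fin 2) →₀ ℕ) :
    normalMonomial p c0 c1 (m + Finsupp.single (Sum.inl i) (p i)) =
      lform c0 c1 i * normalMonomial p c0 c1 m := by
  have hred : reduceExp p (m + Finsupp.single (Sum.inl i) (p i)) = reduceExp p m := by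
    ext (j | j)
    · by_cases h : j = i
      · subst h; simp
      · simp [Ne.symm h]
    · simp
  have hdiv (j : ι) :
      (m + Finsupp.single (Sum.inl i) (p i) : (ι ⊕ Fin 2) →₀ ℕ) (Sum.inl j) / p j =
      m (Sum.inl j) / p j + if j = i then 1 else 0 := by
    by_cases h : j = i
    · subst h; simp [Nat.add_div_right _ hpi]
    · simp [h]
  simp only [normalMonomial, hred, hdiv, pow_add, Finset.prod_mul_distrib, pow_ite, pow_one,
    pow_zero, Finset.prod_ite_eq', Finset.mem_univ, if_true]
  ring

theorem normalMonomial_add_single_inr (m : (ι ⊕ Fin 2) →₀ ℕ) (j : Fin 2) :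
    normalMonomial p c0 c1 (m + Finsupp.single (Sum.inr j) 1) =
      X (Sum.inr j) * normalMonomial p c0 c1 m := by
  have hred : reduceExp p (m + Finsupp.single (Sum.inr j) 1) =
      reduceExp p m + Finsupp.single (Sum.inr j) 1 := by
    ext (i | k) <;> simp [Finsupp.single_apply]
  simp only [normalMonomial, hred, monomial_add_single, Finsupp.add_apply,
    Finsupp.single_apply, reduceCtorEq, if_false, add_zero, pow_one]
  ring

theorem normalForm_mul_X_pow_sub_lform {i : ι} (hpi : 0 < p i) (t : SPoly ι) :
    normalForm p c0 c1 (t * (X (Sum.inl i) ^ p i - lform c0 c1 i)) = 0 := by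
  induction t using MvPolynomial.induction_on' with
  | monomial m c =>
    have hX (j : Fin 2) (a : ℂ) : monomial m c * (C a * X (Sum.inr j)) =
        a • monomial (m + Finsupp.single (Sum.inr j) 1) c := by
      rw [monomial_add_single, pow_one, smul_eq_C_mul]; ring
    rw [lform, mul_sub, mul_add, hX, hX, ← monomial_add_single]
    simp only [map_sub, map_add, map_smul, normalForm_monomial,
      normalMonomial_add_single_inl hpi, normalMonomial_add_single_inr]
    simp only [lform, smul_eq_C_mul]
    ring
  | add f g hf hg => rw [add_mul, map_add, hf, hg, add_zero]

theorem normalForm_eq_zero_of_mem_SIdl (hp : ∀ i, 0 < p i) {f : SPoly ι}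
    (hf : f ∈ SIdl ι p c0 c1) : normalForm p c0 c1 f = 0 := by
  suffices ∀ t, normalForm p c0 c1 (t * f) = 0 by simpa using this 1
  induction hf using Submodule.span_induction with
  | mem g hg =>
    obtain ⟨i, rfl⟩ := hg
    exact fun t => normalForm_mul_X_pow_sub_lform (hp i) t
  | zero => simp
  | add f g _ _ hf hg => intro t; rw [mul_add, map_add, hf, hg, add_zero]
  | smul r f _ hf => intro t; rw [smul_eq_mul, ← mul_assoc, hf]

theorem weight_eq_sum_add_weight_reduceExp (m : (ι ⊕ Fin 2) →₀ ℕ) :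
    Finsupp.weight (lweight p) m =
      ∑ i, (m (Sum.inl i) / p i) • cgen p + Finsupp.weight (lweight p) (reduceExp p m) := by
  conv_lhs => rw [exp_eq_sum_add_reduceExp (p := p) m]
  simp only [map_add, map_sum, map_nsmul, Finsupp.weight_single, lweight, Sum.elim_inl,
    LGroup.nsmul_egen]

theorem isWeightedHomogeneous_normalMonomial (m : (ι ⊕ Fin 2) →₀ ℕ) :
    IsWeightedHomogeneous (lweight p) (normalMonomial p c0 c1 m)
      (Finsupp.weight (lweight p) m) := by
  rw [weight_eq_sum_add_weight_reduceExp]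
  exact (IsWeightedHomogeneous.prod _ _ _ fun i _ =>
    (isWeightedHomogeneous_lform c0 c1 i).pow _).mul (isWeightedHomogeneous_monomial _ _ _ rfl)

theorem isWeightedHomogeneous_normalForm {f : SPoly ι} {y : LGroup ι p}
    (hf : IsWeightedHomogeneous (lweight p) f y) :
    IsWeightedHomogeneous (lweight p) (normalForm p c0 c1 f) y := by
  rw [← mem_weightedHomogeneousSubmodule, normalForm_eq_sum]
  refine Submodule.sum_mem _ fun m hm => Submodule.smul_mem _ _ ?_
  rw [mem_weightedHomogeneousSubmodule, ← hf (mem_support_iff.mp hm)]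
  exact isWeightedHomogeneous_normalMonomial m

theorem eq_zero_of_mem_reducedSubmodule_of_mem_SIdl (hp : ∀ i, 0 < p i) {f : SPoly ι}
    (hf : f ∈ reducedSubmodule p) (hI : f ∈ SIdl ι p c0 c1) : f = 0 :=
  (normalForm_of_mem_reducedSubmodule (c0 := c0) (c1 := c1) hf).symm.trans
    (normalForm_eq_zero_of_mem_SIdl hp hI)

theorem exists_reduced_of_mem_SCompA (hp : ∀ i, 0 < p i) {y : LGroup ι p}
    {w : SAlg ι p c0 c1} (hw : w ∈ SCompA p c0 c1 y) :
    ∃ f ∈ reducedSubmodule p,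
      IsWeightedHomogeneous (lweight p) f y ∧ Ideal.Quotient.mk _ f = w := by
  obtain ⟨f, hf, rfl⟩ := mem_SCompA.mp hw
  exact ⟨normalForm p c0 c1 f, normalForm_mem_reducedSubmodule hp f,
    isWeightedHomogeneous_normalForm hf, mk_normalForm f⟩

end NormalForm

section Expansion

variable {n : ℕ} (p d : Fin n → ℕ) (I : Finset (Fin n))

def expandVec : (Option I → ℤ) →+ (Option (Fin n) → ℤ) where
  toFun v o := o.elim (v none) fun i => if h : i ∈ I then d i * v (some ⟨i, h⟩) else 0
  map_zero' := by ext (_ | i) <;> simp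
  map_add' v w := by
    ext (_ | i)
    · rfl
    · by_cases h : i ∈ I <;> simp [h, mul_add]

variable {p d I}

theorem expandVec_mem_LRel (hd : ∀ i, d i ∣ p i) {v : Option I → ℤ}
    (hv : v ∈ LRel I (pRes p d I)) : expandVec d I v ∈ LRel (Fin n) p := by
  obtain ⟨q, hsome, hnone⟩ := LGroup.mem_LRel.mp hv
  refine LGroup.mem_LRel.mpr ⟨fun i => if h : i ∈ I then q ⟨i, h⟩ else 0, fun i => ?_, ?_⟩
  · by_cases h : i ∈ I
    · simp only [expandVec, AddMonoidHom.coe_mk, ZeroHom.coe_mk, Option.elim_some, dif_pos h,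
        hsome, pRes]
      rw [← mul_assoc, ← Nat.cast_mul, Nat.mul_div_cancel' (hd i)]
    · simp [expandVec, h]
  · simp [expandVec, hnone, ← Finset.sum_attach_eq_sum_dite]

variable (p d I) in
def expandL (hd : ∀ i, d i ∣ p i) : LGroup I (pRes p d I) →+ LGroup (Fin n) p :=
  QuotientAddGroup.map _ _ (expandVec d I) fun _ hv => expandVec_mem_LRel hd hv

theorem expandL_mk (hd : ∀ i, d i ∣ p i) (v : Option I → ℤ) :
    expandL p d I hd (QuotientAddGroup.mk v) = QuotientAddGroup.mk (expandVec d I v) := rfl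

theorem expandL_injective (hp : ∀ i, 0 < p i) (hd : ∀ i, d i ∣ p i) :
    Function.Injective (expandL p d I hd) := by
  rw [injective_iff_map_eq_zero]
  intro y hy
  induction y using QuotientAddGroup.induction_on with | H v => ?_
  rw [expandL_mk, LGroup.mk_eq_zero_iff] at hy
  obtain ⟨q, hsome, hnone⟩ := hy
  have hq : ∀ i ∉ I, q i = 0 := fun i hi => by
    have h := hsome i
    simp only [expandVec, AddMonoidHom.coe_mk, ZeroHom.coe_mk, Option.elim_some, dif_neg hi] at h
    exact (mul_eq_zero.mp h.symm).resolve_left (by exact_mod_cast (hp i).ne')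
  refine LGroup.mk_eq_zero_iff.mpr ⟨fun i => q i, fun i => ?_, ?_⟩
  · have h := hsome i
    simp only [expandVec, AddMonoidHom.coe_mk, ZeroHom.coe_mk, Option.elim_some, dif_pos i.2] at h
    have hd0 : (d i : ℤ) ≠ 0 := by exact_mod_cast (Nat.pos_of_dvd_of_pos (hd i) (hp i)).ne'
    apply mul_left_cancel₀ hd0
    rw [h, pRes, ← mul_assoc, ← Nat.cast_mul, Nat.mul_div_cancel' (hd i)]
  · rw [show v none = -∑ i, q i from hnone, Finset.sum_coe_sort I q,
      Finset.sum_subset (Finset.subset_univ I) fun i _ hi => hq i hi]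

variable (d I) in
def expandExp : ((I ⊕ Fin 2) →₀ ℕ) →+ ((Fin n ⊕ Fin 2) →₀ ℕ) where
  toFun m := Finsupp.equivFunOnFinite.symm <|
    Sum.elim (fun i => if h : i ∈ I then d i * m (Sum.inl ⟨i, h⟩) else 0) fun j => m (Sum.inr j)
  map_zero' := by ext (_ | _) <;> simp
  map_add' m m' := by
    ext (i | j)
    · by_cases h : i ∈ I <;> simp [h, mul_add]
    · simp

theorem expandExp_inl (m : (I ⊕ Fin 2) →₀ ℕ) (i : I) :
    expandExp d I m (Sum.inl i) = d i * m (Sum.inl i) := by simp [expandExp]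

theorem expandExp_inl_of_notMem (m : (I ⊕ Fin 2) →₀ ℕ) {i : Fin n} (hi : i ∉ I) :
    expandExp d I m (Sum.inl i) = 0 := by simp [expandExp, hi]

@[simp] theorem expandExp_inr (m : (I ⊕ Fin 2) →₀ ℕ) (j : Fin 2) :
    expandExp d I m (Sum.inr j) = m (Sum.inr j) := rfl

theorem expandExp_injective (hd : ∀ i : I, 0 < d i) : Function.Injective (expandExp d I) := by
  intro m m' h
  ext (i | j)
  · have := congrArg (· (Sum.inl (i : Fin n))) h
    simp only [expandExp_inl] at this
    exact Nat.eq_of_mul_eq_mul_left (hd i) this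
  · exact congrArg (· (Sum.inr j)) h

theorem weight_expandExp (hd : ∀ i, d i ∣ p i) (m : (I ⊕ Fin 2) →₀ ℕ) :
    Finsupp.weight (lweight p) (expandExp d I m) =
      expandL p d I hd (Finsupp.weight (lweight (pRes p d I)) m) := by
  rw [weight_lweight_eq_mk, weight_lweight_eq_mk, expandL_mk]
  congr 1
  ext (_ | i)
  · simp [expandVec]
  · by_cases h : i ∈ I <;> simp [expandVec, expandExp, h]

variable (d I) in
def expandPoly : SPoly I →ₐ[ℂ] SPoly (Fin n) :=
  aeval (Sum.elim (fun i => X (Sum.inl i.1) ^ d i) fun j => X (Sum.inr j))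

theorem expandExp_single_inl (i : I) :
    expandExp d I (Finsupp.single (Sum.inl i) 1) = Finsupp.single (Sum.inl i.1) (d i) := by
  ext (k | j)
  · by_cases h : k ∈ I
    · lift k to I using h
      rw [expandExp_inl]
      by_cases hk : k = i <;> simp [hk]
    · rw [expandExp_inl_of_notMem _ h, Finsupp.single_apply, if_neg]
      rintro ⟨⟩
      exact h i.2
  · simp

theorem expandExp_single_inr (j : Fin 2) :
    expandExp d I (Finsupp.single (Sum.inr j) 1) = Finsupp.single (Sum.inr j) 1 := by
  ext (k | l)
  · by_cases h : k ∈ I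
    · lift k to I using h
      simp [expandExp_inl]
    · simp [expandExp_inl_of_notMem _ h]
  · simp [Finsupp.single_apply]

theorem expandPoly_monomial (m : (I ⊕ Fin 2) →₀ ℕ) (c : ℂ) :
    expandPoly d I (monomial m c) = monomial (expandExp d I m) c := by
  refine algHom_monomial_of_X _ _ (fun s => ?_) m c
  cases s with
  | inl i => rw [expandPoly, aeval_X, Sum.elim_inl, X_pow_eq_monomial, expandExp_single_inl]
  | inr j => rw [expandPoly, aeval_X, Sum.elim_inr, expandExp_single_inr]; rfl

theorem coeff_expandPoly_expandExp (hd : ∀ i : I, 0 < d i) (f : SPoly I) (m : (I ⊕ Fin 2) →₀ ℕ) :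
    coeff (expandExp d I m) (expandPoly d I f) = coeff m f := by
  induction f using MvPolynomial.induction_on' with
  | monomial u c => simp only [expandPoly_monomial, coeff_monomial, (expandExp_injective hd).eq_iff]
  | add f g hf hg => rw [map_add, coeff_add, coeff_add, hf, hg]

theorem support_expandPoly_subset (f : SPoly I) :
    (expandPoly d I f).support ⊆ f.support.image (expandExp d I) := by
  conv_lhs => rw [f.as_sum, map_sum]
  refine support_sum.trans (Finset.biUnion_subset.mpr fun m hm => ?_)
  rw [expandPoly_monomial]
  exact support_monomial_subset.trans
    (Finset.singleton_subset_iff.mpr (Finset.mem_image_of_mem _ hm))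

theorem mem_range_expandPoly {f : SPoly (Fin n)} (hf : ↑f.support ⊆ Set.range (expandExp d I)) :
    f ∈ (expandPoly d I).range := by
  rw [f.as_sum]
  refine Subalgebra.sum_mem _ fun u hu => ?_
  obtain ⟨m, rfl⟩ := hf hu
  exact ⟨monomial m _, expandPoly_monomial m _⟩

theorem isWeightedHomogeneous_expandPoly (hd : ∀ i, d i ∣ p i) {f : SPoly I}
    {y : LGroup I (pRes p d I)} (hf : IsWeightedHomogeneous (lweight (pRes p d I)) f y) :
    IsWeightedHomogeneous (lweight p) (expandPoly d I f) (expandL p d I hd y) := by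
  intro u hu
  obtain ⟨m, hm, rfl⟩ := Finset.mem_image.mp (support_expandPoly_subset f (mem_support_iff.mpr hu))
  rw [weight_expandExp hd, hf (mem_support_iff.mp hm)]

theorem isWeightedHomogeneous_of_expandPoly (hp : ∀ i, 0 < p i) (hd : ∀ i, d i ∣ p i)
    {f : SPoly I} {y : LGroup I (pRes p d I)}
    (hf : IsWeightedHomogeneous (lweight p) (expandPoly d I f) (expandL p d I hd y)) :
    IsWeightedHomogeneous (lweight (pRes p d I)) f y := by
  intro m hm
  apply expandL_injective hp hd
  rw [← weight_expandExp hd]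
  apply hf
  rwa [coeff_expandPoly_expandExp fun i => Nat.pos_of_dvd_of_pos (hd i) (hp i)]

theorem expandPoly_mem_reducedSubmodule (hp : ∀ i, 0 < p i) (hd : ∀ i, d i ∣ p i)
    {f : SPoly I} (hf : f ∈ reducedSubmodule (pRes p d I)) :
    expandPoly d I f ∈ reducedSubmodule p := by
  rw [reducedSubmodule, mem_restrictSupport_iff] at hf ⊢
  intro u hu i
  obtain ⟨m, hm, rfl⟩ := Finset.mem_image.mp (support_expandPoly_subset f hu)
  by_cases h : i ∈ I
  · lift i to I using h
    rw [expandExp_inl, ← Nat.mul_div_cancel' (hd i)]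
    exact Nat.mul_lt_mul_of_pos_left (hf hm i) (Nat.pos_of_dvd_of_pos (hd i) (hp i))
  · rw [expandExp_inl_of_notMem _ h]
    exact hp i

theorem expandPoly_X_pow_sub (hd : ∀ i, d i ∣ p i) (c0 c1 : Fin n → ℂ) (i : I) :
    expandPoly d I (X (Sum.inl i) ^ pRes p d I i -
        (C (cRes c0 I i) * X (Sum.inr 0) + C (cRes c1 I i) * X (Sum.inr 1))) =
      X (Sum.inl i.1) ^ p i - lform c0 c1 i := by
  simp [expandPoly, ← pow_mul, pRes, Nat.mul_div_cancel' (hd i), lform, cRes]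

variable (p d I) in
def expandAlg (c0 c1 : Fin n → ℂ) (hd : ∀ i, d i ∣ p i) :
    SAlg I (pRes p d I) (cRes c0 I) (cRes c1 I) →ₐ[ℂ] SAlg (Fin n) p c0 c1 :=
  Ideal.quotientMapₐ _ (expandPoly d I) <| Ideal.span_le.mpr <| by
    rintro _ ⟨i, rfl⟩
    rw [SetLike.mem_coe, Ideal.mem_comap, expandPoly_X_pow_sub hd]
    exact X_pow_sub_lform_mem_SIdl (i : Fin n)

variable {c0 c1 : Fin n → ℂ}

theorem expandAlg_mk (hd : ∀ i, d i ∣ p i) (f : SPoly I) :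
    expandAlg p d I c0 c1 hd (Ideal.Quotient.mk _ f) = Ideal.Quotient.mk _ (expandPoly d I f) :=
  rfl

theorem expandAlg_injective (hp : ∀ i, 0 < p i) (hd : ∀ i, d i ∣ p i) :
    Function.Injective (expandAlg p d I c0 c1 hd) := by
  have hd0 (i : Fin n) : 0 < d i := Nat.pos_of_dvd_of_pos (hd i) (hp i)
  have hp' (i : I) : 0 < pRes p d I i := Nat.div_pos (Nat.le_of_dvd (hp i) (hd i)) (hd0 i)
  rw [injective_iff_map_eq_zero]
  intro w hw
  obtain ⟨f, rfl⟩ := Ideal.Quotient.mk_surjective w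
  rw [← mk_normalForm (c0 := cRes c0 I) (c1 := cRes c1 I) f] at hw ⊢
  rw [expandAlg_mk, Ideal.Quotient.eq_zero_iff_mem] at hw
  have hred := normalForm_mem_reducedSubmodule (c0 := cRes c0 I) (c1 := cRes c1 I) hp' f
  have h0 := eq_zero_of_mem_reducedSubmodule_of_mem_SIdl hp
    (expandPoly_mem_reducedSubmodule hp hd hred) hw
  have : normalForm (pRes p d I) (cRes c0 I) (cRes c1 I) f = 0 := by
    ext m
    rw [← coeff_expandPoly_expandExp fun i => hd0 i, h0, coeff_zero, coeff_zero]
  rw [this, map_zero]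

theorem expandAlg_mem_SCompA (hd : ∀ i, d i ∣ p i) {y : LGroup I (pRes p d I)}
    {w : SAlg I (pRes p d I) (cRes c0 I) (cRes c1 I)}
    (hw : w ∈ SCompA (pRes p d I) (cRes c0 I) (cRes c1 I) y) :
    expandAlg p d I c0 c1 hd w ∈ SCompA p c0 c1 (expandL p d I hd y) := by
  obtain ⟨f, hf, rfl⟩ := mem_SCompA.mp hw
  exact mem_SCompA.mpr ⟨_, isWeightedHomogeneous_expandPoly hd hf, rfl⟩

end Expansion

section Veronese

variable {n : ℕ} {p d a : Fin n → ℕ} {I : Finset (Fin n)}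

theorem expandL_sum_nsmul_egen_add_zsmul_cgen (hd : ∀ i, d i ∣ p i) (hda : ∀ i, d i ∣ a i)
    (ha : ∀ i ∉ I, a i = 0) (aZ : ℤ) :
    expandL p d I hd (∑ i : I, (a i / d i) • egen (pRes p d I) i + aZ • cgen (pRes p d I)) =
      ∑ i, a i • egen p i + aZ • cgen p := by
  rw [LGroup.sum_nsmul_egen_add_zsmul_cgen, LGroup.sum_nsmul_egen_add_zsmul_cgen, expandL_mk]
  congr 1
  ext (_ | i)
  · rfl
  · by_cases h : i ∈ I
    · simp [expandVec, h, Int.mul_ediv_cancel' (Int.natCast_dvd_natCast.mpr (hda i))]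
    · simp [expandVec, h, ha i h]

theorem mem_range_expandExp (hd : ∀ i, d i ∣ p i) (hda : ∀ i, d i ∣ a i) (ha : ∀ i ∉ I, a i = 0)
    {aZ k : ℤ} {u : (Fin n ⊕ Fin 2) →₀ ℕ} (hu : ∀ i, u (Sum.inl i) < p i)
    (hw : Finsupp.weight (lweight p) u = k • (∑ i, a i • egen p i + aZ • cgen p)) :
    u ∈ Set.range (expandExp d I) := by
  rw [weight_lweight_eq_mk, LGroup.sum_nsmul_egen_add_zsmul_cgen, ← QuotientAddGroup.mk_zsmul,
    eq_comm] at hw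
  have hdvd (i : Fin n) : (p i : ℤ) ∣ k * a i - u (Sum.inl i) := by
    simpa using LGroup.dvd_sub_of_mk_eq hw i
  have hdu (i : Fin n) : d i ∣ u (Sum.inl i) := by
    have hdi : (d i : ℤ) ∣ k * a i - u (Sum.inl i) :=
      (Int.natCast_dvd_natCast.mpr (hd i)).trans (hdvd i)
    have := dvd_sub (dvd_mul_of_dvd_right (Int.natCast_dvd_natCast.mpr (hda i)) k) hdi
    rw [sub_sub_cancel] at this
    exact_mod_cast this
  have hu0 (i : Fin n) (hi : i ∉ I) : u (Sum.inl i) = 0 := by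
    have := hdvd i
    rw [ha i hi, Nat.cast_zero, mul_zero, zero_sub, dvd_neg] at this
    exact Nat.eq_zero_of_dvd_of_lt (by exact_mod_cast this) (hu i)
  refine ⟨Finsupp.equivFunOnFinite.symm
    (Sum.elim (fun i => u (Sum.inl i.1) / d i) fun j => u (Sum.inr j)), ?_⟩
  ext (i | j)
  · by_cases h : i ∈ I
    · lift i to I using h
      rw [expandExp_inl]
      simp [Nat.mul_div_cancel' (hdu i)]
    · rw [expandExp_inl_of_notMem _ h, hu0 i h]
  · simp

theorem map_expandAlg_SCompA_zsmul {c0 c1 : Fin n → ℂ} (hp : ∀ i, 0 < p i) (hd : ∀ i, d i ∣ p i)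
    (hda : ∀ i, d i ∣ a i) (ha : ∀ i ∉ I, a i = 0) (aZ k : ℤ) :
    (SCompA (pRes p d I) (cRes c0 I) (cRes c1 I)
        (k • (∑ i : I, (a i / d i) • egen (pRes p d I) i + aZ • cgen (pRes p d I)))).map
        (expandAlg p d I c0 c1 hd).toLinearMap =
      SCompA p c0 c1 (k • (∑ i, a i • egen p i + aZ • cgen p)) := by
  have hx := expandL_sum_nsmul_egen_add_zsmul_cgen hd hda ha aZ
  apply le_antisymm
  · rintro _ ⟨w, hw, rfl⟩
    rw [← hx, ← map_zsmul]
    exact expandAlg_mem_SCompA hd hw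
  · intro w hw
    obtain ⟨f, hred, hf, rfl⟩ := exists_reduced_of_mem_SCompA hp hw
    rw [reducedSubmodule, mem_restrictSupport_iff] at hred
    obtain ⟨f', rfl⟩ := mem_range_expandPoly fun u hu =>
      mem_range_expandExp (d := d) (I := I) hd hda ha (hred hu) (hf (mem_support_iff.mp hu))
    rw [← hx, ← map_zsmul] at hf
    exact ⟨Ideal.Quotient.mk _ f', mem_SCompA.mpr
      ⟨f', isWeightedHomogeneous_of_expandPoly hp hd hf, rfl⟩, rfl⟩

end Veronese

theorem veronese_change_of_parameters_iso_general (n : ℕ) (p : Fin n → ℕ)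
    (hp : ∀ i, 2 ≤ p i)
    (c0 c1 : Fin n → ℂ)
    (x : LGroup (Fin n) p)
    (a : Fin n → ℕ) (aZ : ℤ)
    (hxnf : x = (∑ i, a i • egen p i) + aZ • cgen p)
    (R : Subalgebra ℂ (SAlg (Fin n) p c0 c1))
    (hR : Subalgebra.toSubmodule R = SVerA p c0 c1 x)
    (R' : Subalgebra ℂ (SAlg ↥(Finset.univ.filter (fun i => a i ≠ 0))
        (pRes p (fun i => Nat.gcd (a i) (p i)) (Finset.univ.filter (fun i => a i ≠ 0)))
        (cRes c0 (Finset.univ.filter (fun i => a i ≠ 0)))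
        (cRes c1 (Finset.univ.filter (fun i => a i ≠ 0)))))
    (hR' : Subalgebra.toSubmodule R' =
      SVerA (pRes p (fun i => Nat.gcd (a i) (p i)) (Finset.univ.filter (fun i => a i ≠ 0)))
        (cRes c0 (Finset.univ.filter (fun i => a i ≠ 0)))
        (cRes c1 (Finset.univ.filter (fun i => a i ≠ 0)))
        ((∑ i : ↥(Finset.univ.filter (fun i => a i ≠ 0)),
            (a i.1 / Nat.gcd (a i.1) (p i.1)) •
              egen (pRes p (fun i => Nat.gcd (a i) (p i))
                (Finset.univ.filter (fun i => a i ≠ 0))) i) +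
          aZ • cgen (pRes p (fun i => Nat.gcd (a i) (p i))
            (Finset.univ.filter (fun i => a i ≠ 0))))) :
    ∃ φ : ↥R ≃ₐ[ℂ] ↥R',
      ∀ (k : ℤ) (w : ↥R),
        (w : SAlg (Fin n) p c0 c1) ∈ SCompA p c0 c1 (k • x) ↔
          ((φ w : ↥R') : SAlg ↥(Finset.univ.filter (fun i => a i ≠ 0))
              (pRes p (fun i => Nat.gcd (a i) (p i)) (Finset.univ.filter (fun i => a i ≠ 0)))
              (cRes c0 (Finset.univ.filter (fun i => a i ≠ 0)))
              (cRes c1 (Finset.univ.filter (fun i => a i ≠ 0)))) ∈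
            SCompA (pRes p (fun i => Nat.gcd (a i) (p i))
                (Finset.univ.filter (fun i => a i ≠ 0)))
              (cRes c0 (Finset.univ.filter (fun i => a i ≠ 0)))
              (cRes c1 (Finset.univ.filter (fun i => a i ≠ 0)))
              (k • ((∑ i : ↥(Finset.univ.filter (fun i => a i ≠ 0)),
                  (a i.1 / Nat.gcd (a i.1) (p i.1)) •
                    egen (pRes p (fun i => Nat.gcd (a i) (p i))
                      (Finset.univ.filter (fun i => a i ≠ 0))) i) +
                aZ • cgen (pRes p (fun i => Nat.gcd (a i) (p i))
                  (Finset.univ.filter (fun i => a i ≠ 0))))) := by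
  have hp0 (i : Fin n) : 0 < p i := by have := hp i; omega
  have hd (i : Fin n) : Nat.gcd (a i) (p i) ∣ p i := Nat.gcd_dvd_right _ _
  subst hxnf
  exact exists_algEquiv_of_map_eq _ (expandAlg_injective hp0 hd)
    (fun k => map_expandAlg_SCompA_zsmul hp0 hd (fun i => Nat.gcd_dvd_left _ _)
      (fun i hi => by simpa using hi) aZ k) hR hR'

/-- For a non-torsion `x` with normal form `x = ∑ aᵢeᵢ + a·c`, setting
`I := {i : aᵢ ≠ 0}`, `dᵢ := gcd(aᵢ,pᵢ)`, `p′ᵢ := pᵢ/dᵢ` and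
`x′ := ∑_{i∈I} (aᵢ/dᵢ)e′ᵢ + a·c′`, there is an isomorphism of `ℤ`-graded `ℂ`-algebras
`S^x ≅ (S′)^{x′}`. -/
theorem veronese_change_of_parameters_iso (n : ℕ) (hn : 1 ≤ n) (p : Fin n → ℕ)
    (hp : ∀ i, 2 ≤ p i)
    (c0 c1 : Fin n → ℂ) (hnz : ∀ i, (c0 i, c1 i) ≠ (0, 0))
    (hdist : ∀ i j : Fin n, i ≠ j → c0 i * c1 j ≠ c1 i * c0 j)
    (x : LGroup (Fin n) p) (hx : ∀ m : ℤ, m ≠ 0 → m • x ≠ 0)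
    (a : Fin n → ℕ) (ha : ∀ i, a i < p i) (aZ : ℤ)
    (hxnf : x = (∑ i, a i • egen p i) + aZ • cgen p)
    (R : Subalgebra ℂ (SAlg (Fin n) p c0 c1))
    (hR : Subalgebra.toSubmodule R = SVerA p c0 c1 x)
    (R' : Subalgebra ℂ (SAlg ↥(Finset.univ.filter (fun i => a i ≠ 0))
        (pRes p (fun i => Nat.gcd (a i) (p i)) (Finset.univ.filter (fun i => a i ≠ 0)))
        (cRes c0 (Finset.univ.filter (fun i => a i ≠ 0)))
        (cRes c1 (Finset.univ.filter (fun i => a i ≠ 0)))))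
    (hR' : Subalgebra.toSubmodule R' =
      SVerA (pRes p (fun i => Nat.gcd (a i) (p i)) (Finset.univ.filter (fun i => a i ≠ 0)))
        (cRes c0 (Finset.univ.filter (fun i => a i ≠ 0)))
        (cRes c1 (Finset.univ.filter (fun i => a i ≠ 0)))
        ((∑ i : ↥(Finset.univ.filter (fun i => a i ≠ 0)),
            (a i.1 / Nat.gcd (a i.1) (p i.1)) •
              egen (pRes p (fun i => Nat.gcd (a i) (p i))
                (Finset.univ.filter (fun i => a i ≠ 0))) i) +
          aZ • cgen (pRes p (fun i => Nat.gcd (a i) (p i))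
            (Finset.univ.filter (fun i => a i ≠ 0))))) :
    ∃ φ : ↥R ≃ₐ[ℂ] ↥R',
      ∀ (k : ℤ) (w : ↥R),
        (w : SAlg (Fin n) p c0 c1) ∈ SCompA p c0 c1 (k • x) ↔
          ((φ w : ↥R') : SAlg ↥(Finset.univ.filter (fun i => a i ≠ 0))
              (pRes p (fun i => Nat.gcd (a i) (p i)) (Finset.univ.filter (fun i => a i ≠ 0)))
              (cRes c0 (Finset.univ.filter (fun i => a i ≠ 0)))
              (cRes c1 (Finset.univ.filter (fun i => a i ≠ 0)))) ∈
            SCompA (pRes p (fun i => Nat.gcd (a i) (p i))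
                (Finset.univ.filter (fun i => a i ≠ 0)))
              (cRes c0 (Finset.univ.filter (fun i => a i ≠ 0)))
              (cRes c1 (Finset.univ.filter (fun i => a i ≠ 0)))
              (k • ((∑ i : ↥(Finset.univ.filter (fun i => a i ≠ 0)),
                  (a i.1 / Nat.gcd (a i.1) (p i.1)) •
                    egen (pRes p (fun i => Nat.gcd (a i) (p i))
                      (Finset.univ.filter (fun i => a i ≠ 0))) i) +
                aZ • cgen (pRes p (fun i => Nat.gcd (a i) (p i))
                  (Finset.univ.filter (fun i => a i ≠ 0))))) :=
  veronese_change_of_parameters_iso_general n p hp c0 c1 x a aZ hxnf R hR R' hR'
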